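/- arXiv:2311.15754 — 2 statements merged into one kernel-verified Lean document; each statement's English description precedes it below -/
import Mathlib

section
/- Let A be a commutative ring, M an A-module, and k ≥ 0. Let V_k ⊆ A ⊗_ℤ M be the subgroup generated by all elements δ_{f₁}∘⋯∘δ_{f_{k+1}}(g ⊗ m) with f_i, g ∈ A, m ∈ M, and let J^k(M) := (A ⊗_ℤ M)/V_k with the induced A-module structure from ▷, and j^k : M → J^k(M) the map m ↦ [1 ⊗ m]. Then for every differential operator D : M → N of order ≤ k (N an A-module), there exists a unique A-linear map ĵ[D] : J^k(M) → N with D = ĵ[D] ∘ j^k; explicitly ĵ[D]([f ⊗ m]) = f • D(m). Conversely, for every A-linear F : J^k(M) → N, the composite F ∘ j^k is a differential operator of order ≤ k. -/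
open scoped TensorProduct

/-- The action `f ▷ (g ⊗ m) = (f·g) ⊗ m` on `A ⊗_ℤ M`, as an additive endomorphism. -/
noncomputable def Ltri (A : Type*) [CommRing A] (M : Type*) [AddCommGroup M] [Module A M]
    (f : A) : Module.End ℤ (A ⊗[ℤ] M) :=
  TensorProduct.map ((DistribMulAction.toAddMonoidHom A f).toIntLinearMap) LinearMap.id

/-- The action `f ▶ (g ⊗ m) = g ⊗ (f • m)` on `A ⊗_ℤ M`, as an additive endomorphism. -/
noncomputable def Lbl (A : Type*) [CommRing A] (M : Type*) [AddCommGroup M] [Module A M]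
    (f : A) : Module.End ℤ (A ⊗[ℤ] M) :=
  TensorProduct.map LinearMap.id ((DistribMulAction.toAddMonoidHom M f).toIntLinearMap)

/-- `δ_f := L^▷_f − L^▶_f`, so `δ_f (g ⊗ m) = (f·g) ⊗ m − g ⊗ (f • m)`. -/
noncomputable def delta (A : Type*) [CommRing A] (M : Type*) [AddCommGroup M] [Module A M]
    (f : A) : Module.End ℤ (A ⊗[ℤ] M) :=
  Ltri A M f - Lbl A M f

/-- Iterated operator `δ_{f₁} ∘ ⋯ ∘ δ_{f_j}` for a list `(f₁, …, f_j)`. -/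
noncomputable def iterDelta (A : Type*) [CommRing A] (M : Type*) [AddCommGroup M]
    [Module A M] : List A → Module.End ℤ (A ⊗[ℤ] M)
  | [] => 1
  | f :: fs => delta A M f * iterDelta A M fs

/-- The submodule `V_k ⊆ A ⊗_ℤ M` generated (under the `▷` action) by all elements
`δ_{f₁}∘⋯∘δ_{f_{k+1}}(g ⊗ m)`. -/
noncomputable def Vk (A : Type*) [CommRing A] (M : Type*) [AddCommGroup M] [Module A M]
    (k : ℕ) : Submodule A (A ⊗[ℤ] M) :=
  Submodule.span A {x | ∃ (l : List A) (g : A) (m : M),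
    l.length = k + 1 ∧ x = iterDelta A M l (g ⊗ₜ[ℤ] m)}

/-- The jet prolongation `j^k : M → J^k(M) = (A ⊗_ℤ M)/V_k`, `m ↦ [1 ⊗ m]`. -/
noncomputable def jetProl (A : Type*) [CommRing A] (M : Type*) [AddCommGroup M] [Module A M]
    (k : ℕ) (m : M) : (A ⊗[ℤ] M) ⧸ Vk A M k :=
  Submodule.Quotient.mk ((1 : A) ⊗ₜ[ℤ] m)

/-- Multiplication by `f : A` as an additive (`ℤ`-linear) endomorphism of `M`. -/
def lam (A : Type*) [CommRing A] (M : Type*) [AddCommGroup M] [Module A M] (f : A) :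
    Module.End ℤ M :=
  (DistribMulAction.toAddMonoidHom M f).toIntLinearMap

/-- Differential operators of order `≤ k` from the `A`-module `M` to the `A`-module `N`,
defined inductively: order `≤ 0` means `A`-linear, and `D` has order `≤ k + 1` iff
`D ∘ λ^M_f − λ^N_f ∘ D` has order `≤ k` for every `f : A`. -/
def IsDiffOp2 (A : Type*) [CommRing A] {M N : Type*} [AddCommGroup M] [Module A M]
    [AddCommGroup N] [Module A N] : ℕ → (M →ₗ[ℤ] N) → Prop
  | 0 => fun D => ∀ (f : A) (m : M), D (f • m) = f • D m
  | k + 1 => fun D => ∀ f : A, IsDiffOp2 A k (D ∘ₗ lam A M f - lam A N f ∘ₗ D)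


/-!
A `ℤ`-linear map `D : M → N` extends to the `A`-linear map `D̃ : A ⊗_ℤ M → N`,
`g ⊗ m ↦ g • D m`, and `D̃ ∘ δ_f = -(D ∘ λ_f − λ_f ∘ D)~`. Iterating, `D̃` kills
`δ_{f₁} ⋯ δ_{f_{k+1}} (g ⊗ m)` exactly when the `(k+1)`-fold commutator
`[⋯[D, λ_{f₁}], ⋯, λ_{f_{k+1}}]` vanishes, which is what order `≤ k` means. So `D` has order
`≤ k` iff `D̃` factors through `J^k(M)`; every `A`-linear `G` on `A ⊗_ℤ M` is `D̃` for
`D = G(1 ⊗ -)`, and an `A`-linear map on `J^k(M)` is determined by its values on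
`[1 ⊗ m]`.
-/

section

variable {A : Type*} [CommRing A] {M : Type*} [AddCommGroup M]
  {N : Type*} [AddCommGroup N] [Module A N]

variable (A) in
noncomputable def tensorLift (D : M →ₗ[ℤ] N) : (A ⊗[ℤ] M) →ₗ[A] N :=
  TensorProduct.AlgebraTensorModule.lift (LinearMap.toSpanSingleton A (M →ₗ[ℤ] N) D)

@[simp] lemma tensorLift_tmul (D : M →ₗ[ℤ] N) (g : A) (m : M) :
    tensorLift A D (g ⊗ₜ[ℤ] m) = g • D m := rfl

lemma tmul_eq_smul_one_tmul (f : A) (m : M) : f ⊗ₜ[ℤ] m = f • ((1 : A) ⊗ₜ[ℤ] m) := by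
  rw [TensorProduct.smul_tmul', smul_eq_mul, mul_one]

lemma tensorLift_restrictScalars_comp_mk_one (G : (A ⊗[ℤ] M) →ₗ[A] N) :
    tensorLift A ((G.restrictScalars ℤ) ∘ₗ TensorProduct.mk ℤ A M 1) = G := by
  ext m
  exact one_smul A _

end

section

variable {A : Type*} [CommRing A] {M : Type*} [AddCommGroup M] [Module A M]
  {N : Type*} [AddCommGroup N] [Module A N]

@[simp] lemma lam_apply (f : A) (m : M) : lam A M f m = f • m := rfl

@[simp] lemma delta_tmul (f g : A) (m : M) :
    delta A M f (g ⊗ₜ[ℤ] m) = (f * g) ⊗ₜ[ℤ] m - g ⊗ₜ[ℤ] (f • m) := rfl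

variable (A) in
def bracket (f : A) (D : M →ₗ[ℤ] N) : M →ₗ[ℤ] N :=
  D ∘ₗ lam A M f - lam A N f ∘ₗ D

lemma isDiffOp2_zero_iff (D : M →ₗ[ℤ] N) :
    IsDiffOp2 A 0 D ↔ ∀ f : A, bracket A f D = 0 := by
  simp only [IsDiffOp2, LinearMap.ext_iff, bracket, LinearMap.comp_apply, lam_apply,
    sub_eq_zero]

lemma isDiffOp2_succ_iff (k : ℕ) (D : M →ₗ[ℤ] N) :
    IsDiffOp2 A (k + 1) D ↔ ∀ f : A, IsDiffOp2 A k (bracket A f D) :=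
  Iff.rfl

variable (A) in
def iterBracket : List A → (M →ₗ[ℤ] N) → (M →ₗ[ℤ] N)
  | [], D => D
  | f :: fs, D => iterBracket fs (bracket A f D)

theorem isDiffOp2_iff_iterBracket_eq_zero (k : ℕ) (D : M →ₗ[ℤ] N) :
    IsDiffOp2 A k D ↔ ∀ l : List A, l.length = k + 1 → iterBracket A l D = 0 := by
  induction k generalizing D with
  | zero =>
    rw [isDiffOp2_zero_iff]
    refine ⟨fun h l hl => ?_, fun h f => h [f] rfl⟩
    obtain ⟨f, rfl⟩ := List.length_eq_one_iff.1 hl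
    exact h f
  | succ k ih =>
    simp only [isDiffOp2_succ_iff, ih]
    refine ⟨fun h l hl => ?_, fun h f l hl => h (f :: l) (by simp [hl])⟩
    obtain ⟨f, l, rfl⟩ := List.exists_cons_of_length_eq_add_one hl
    exact h f l (by simpa using hl)

lemma tensorLift_delta (f : A) (D : M →ₗ[ℤ] N) (x : A ⊗[ℤ] M) :
    tensorLift A D (delta A M f x) = -tensorLift A (bracket A f D) x := by
  induction x using TensorProduct.induction_on with
  | zero => simp
  | tmul g m =>
    simp only [delta_tmul, map_sub, tensorLift_tmul, bracket, LinearMap.sub_apply,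
      LinearMap.comp_apply, lam_apply, smul_sub, mul_smul, smul_comm g f]
    abel
  | add x y hx hy => simp only [map_add, hx, hy, neg_add]

theorem tensorLift_iterDelta (l : List A) (D : M →ₗ[ℤ] N) (x : A ⊗[ℤ] M) :
    tensorLift A D (iterDelta A M l x) =
      (-1 : ℤ) ^ l.length • tensorLift A (iterBracket A l D) x := by
  induction l generalizing D with
  | nil => simp [iterDelta, iterBracket]
  | cons f l ih =>
    change tensorLift A D (delta A M f (iterDelta A M l x)) = _
    rw [tensorLift_delta, ih, List.length_cons, pow_succ, mul_neg_one, neg_smul]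
    rfl

theorem Vk_le_ker_tensorLift_iff (k : ℕ) (D : M →ₗ[ℤ] N) :
    Vk A M k ≤ LinearMap.ker (tensorLift A D) ↔ IsDiffOp2 A k D := by
  have hvanish (l : List A) (g : A) (m : M) :
      tensorLift A D (iterDelta A M l (g ⊗ₜ[ℤ] m)) = 0 ↔ g • iterBracket A l D m = 0 := by
    rw [tensorLift_iterDelta, tensorLift_tmul, (isUnit_neg_one.pow _).smul_eq_zero]
  rw [isDiffOp2_iff_iterBracket_eq_zero, Vk, Submodule.span_le]
  constructor
  · intro h l hl
    ext m
    simpa using (hvanish l 1 m).1 (h ⟨l, 1, m, hl, rfl⟩)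
  · rintro h _ ⟨l, g, m, hl, rfl⟩
    exact (hvanish l g m).2 (by rw [h l hl, LinearMap.zero_apply, smul_zero])

lemma quotient_mk_tmul_eq_smul_jetProl (k : ℕ) (f : A) (m : M) :
    (Submodule.Quotient.mk (f ⊗ₜ[ℤ] m) : (A ⊗[ℤ] M) ⧸ Vk A M k) = f • jetProl A M k m := by
  rw [tmul_eq_smul_one_tmul, Submodule.Quotient.mk_smul, jetProl]

lemma jet_hom_ext {k : ℕ} {F G : ((A ⊗[ℤ] M) ⧸ Vk A M k) →ₗ[A] N}
    (h : ∀ m : M, F (jetProl A M k m) = G (jetProl A M k m)) : F = G := by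
  ext m
  exact h m

end

/-- Universal property of the `k`-th jet module: every differential operator `D : M → N`
of order `≤ k` factors uniquely through `j^k` via an `A`-linear map `ĵ[D] : J^k(M) → N`,
explicitly given by `ĵ[D]([f ⊗ m]) = f • D(m)`; conversely, for every `A`-linear
`F : J^k(M) → N` the composite `F ∘ j^k` is a differential operator of order `≤ k`. -/
theorem jet_universal_property (A : Type*) [CommRing A] (M : Type*) [AddCommGroup M]
    [Module A M] (N : Type*) [AddCommGroup N] [Module A N] (k : ℕ) :
    (∀ D : M →ₗ[ℤ] N, IsDiffOp2 A k D →
      ∃! F : ((A ⊗[ℤ] M) ⧸ Vk A M k) →ₗ[A] N, ∀ m : M, F (jetProl A M k m) = D m) ∧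
    (∀ (D : M →ₗ[ℤ] N), IsDiffOp2 A k D →
      ∀ F : ((A ⊗[ℤ] M) ⧸ Vk A M k) →ₗ[A] N, (∀ m : M, F (jetProl A M k m) = D m) →
        ∀ (f : A) (m : M), F (Submodule.Quotient.mk (f ⊗ₜ[ℤ] m)) = f • D m) ∧
    (∀ F : ((A ⊗[ℤ] M) ⧸ Vk A M k) →ₗ[A] N,
      ∃ D₀ : M →ₗ[ℤ] N, (∀ m : M, D₀ m = F (jetProl A M k m)) ∧ IsDiffOp2 A k D₀) := by
  refine ⟨fun D hD => ?_, fun D _ F hF f m => ?_, fun F => ?_⟩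
  · have hle := (Vk_le_ker_tensorLift_iff k D).2 hD
    refine ⟨(Vk A M k).liftQ (tensorLift A D) hle, fun m => one_smul A (D m),
      fun F hF => jet_hom_ext fun m => (hF m).trans (one_smul A (D m)).symm⟩
  · rw [quotient_mk_tmul_eq_smul_jetProl, map_smul, hF]
  · set G := F ∘ₗ (Vk A M k).mkQ
    refine ⟨(G.restrictScalars ℤ) ∘ₗ TensorProduct.mk ℤ A M 1, fun m => rfl, ?_⟩
    rw [← Vk_le_ker_tensorLift_iff, tensorLift_restrictScalars_comp_mk_one]
    exact (Submodule.ker_mkQ _).ge.trans (LinearMap.ker_le_ker_comp _ F)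
end

section
/- Let A be a commutative ring and M an A-module. Define the geometrization Geo(M) := M / M^•, where M^• := ⋂_{q ≥ 1, 𝔪 maximal} 𝔪^q M, with the quotient map geo : M → Geo(M). Then Geo(M) is geometric (i.e. Geo(M)^• = 0), and Geo has the universal property: for any geometric A-module N and A-linear map φ : M → N, there exists a unique A-linear map φ̂ : Geo(M) → N with φ̂ ∘ geo = φ. -/
/-- `M^• := ⋂_{q ≥ 1} ⋂_{𝔪 maximal} 𝔪^q M`, the submodule of sections "vanishing at all
points to all orders". -/
def bulletSub (A : Type*) [CommRing A] (M : Type*) [AddCommGroup M] [Module A M] :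
    Submodule A M :=
  ⨅ (q : ℕ) (_ : 1 ≤ q) (I : Ideal A) (_ : I.IsMaximal), (I ^ q) • (⊤ : Submodule A M)

/-- An `A`-module is geometric if `M^• = 0`. -/
def IsGeometric (A : Type*) [CommRing A] (M : Type*) [AddCommGroup M] [Module A M] : Prop :=
  bulletSub A M = ⊥

/-!
A linear map carries `𝔪^q M` into `𝔪^q N`, hence `M^•` into `N^•`; into a geometric module it
therefore kills `M^•` and factors through `Geo(M)`. For `Geo(M)^• = 0`: the preimage of
`𝔪^q Geo(M)` in `M` is `𝔪^q M + M^•`, which is just `𝔪^q M` since `M^• ⊆ 𝔪^q M`; so the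
preimage of `Geo(M)^•` is `M^•`.
-/

open Submodule

section

variable {A : Type*} [CommRing A] {M N : Type*} [AddCommGroup M] [Module A M]
  [AddCommGroup N] [Module A N]

theorem bulletSub_le_ideal_pow_smul_top {q : ℕ} (hq : 1 ≤ q) {I : Ideal A} (hI : I.IsMaximal) :
    bulletSub A M ≤ (I ^ q) • (⊤ : Submodule A M) :=
  iInf_le_of_le q <| iInf_le_of_le hq <| iInf_le_of_le I <| iInf_le _ hI

theorem map_bulletSub_le (f : M →ₗ[A] N) : (bulletSub A M).map f ≤ bulletSub A N := by
  simp only [bulletSub, le_iInf_iff]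
  intro q hq I hI
  calc (bulletSub A M).map f ≤ ((I ^ q) • ⊤ : Submodule A M).map f :=
        map_mono (bulletSub_le_ideal_pow_smul_top hq hI)
    _ = (I ^ q) • (⊤ : Submodule A M).map f := map_smul'' _ _ _
    _ ≤ (I ^ q) • ⊤ := smul_mono_right _ le_top

theorem bulletSub_le_ker_of_isGeometric (hN : IsGeometric A N) (f : M →ₗ[A] N) :
    bulletSub A M ≤ LinearMap.ker f :=
  map_le_iff_le_comap.mp (hN ▸ map_bulletSub_le f)

theorem comap_mkQ_ideal_smul_top (P : Submodule A M) (I : Ideal A) :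
    (I • ⊤ : Submodule A (M ⧸ P)).comap P.mkQ = P ⊔ I • ⊤ := by
  rw [← comap_map_mkQ, map_smul'', Submodule.map_top, range_mkQ]

theorem comap_mkQ_bulletSub {P : Submodule A M} (hP : P ≤ bulletSub A M) :
    (bulletSub A (M ⧸ P)).comap P.mkQ = bulletSub A M := by
  simp only [bulletSub, comap_iInf, comap_mkQ_ideal_smul_top]
  refine iInf_congr fun q => iInf_congr fun hq => iInf_congr fun I => iInf_congr fun hI => ?_
  exact sup_eq_right.mpr (hP.trans (bulletSub_le_ideal_pow_smul_top hq hI))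

theorem isGeometric_quotient_bulletSub : IsGeometric A (M ⧸ bulletSub A M) := by
  rw [IsGeometric, ← map_comap_eq_of_surjective (mkQ_surjective _) (bulletSub A _),
    comap_mkQ_bulletSub le_rfl, mkQ_map_self]

end

/-- Geometrization `Geo(M) := M / M^•` is geometric, and it has the universal property:
every `A`-linear map from `M` into a geometric module factors uniquely through the
quotient map `geo : M → Geo(M)`. -/
theorem geometrization (A : Type*) [CommRing A] (M : Type*) [AddCommGroup M] [Module A M] :
    IsGeometric A (M ⧸ bulletSub A M) ∧
    ∀ (N : Type*) [AddCommGroup N] [Module A N], IsGeometric A N →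
      ∀ φ : M →ₗ[A] N, ∃! φhat : (M ⧸ bulletSub A M) →ₗ[A] N,
        φhat.comp (bulletSub A M).mkQ = φ := by
  refine ⟨isGeometric_quotient_bulletSub, fun N _ _ hN φ => ?_⟩
  have hφ := bulletSub_le_ker_of_isGeometric hN φ
  exact ⟨(bulletSub A M).liftQ φ hφ, liftQ_mkQ _ _ hφ,
    fun ψ hψ => linearMap_qext _ (hψ.trans (liftQ_mkQ _ _ hφ).symm)⟩
end
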